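/- Let $\lambda \in \mathbb{N}$, $\lambda \geq 1$, and let $f, g : \mathbb{T}^d \to \mathbb{R}$ be smooth functions with $\int_{\mathbb{T}^d} g(x)\,dx = 0$. Then $\big| \int_{\mathbb{T}^d} f(x) g(\lambda x)\,dx \big| \leq \sqrt{d}\, \lambda^{-1} \|f\|_{C^1(\mathbb{T}^d)} \|g\|_{L^1(\mathbb{T}^d)}$. -/

import Mathlib

open MeasureTheory
open scoped ENNReal NNReal BigOperators

noncomputable section

/-- Points of `ℝ^d`; periodic functions on it model functions on the torus `𝕋^d`. -/
abbrev Vec (d : ℕ) := Fin d → ℝ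

/-- The fundamental domain `[0,1)^d` of the torus. -/
def cube (d : ℕ) : Set (Vec d) := Set.univ.pi fun _ => Set.Ico (0:ℝ) 1

/-- `f` is `ℤ^d`-periodic, i.e. descends to the flat torus `𝕋^d = ℝ^d/ℤ^d`. -/
def IsPeriodic {d : ℕ} {E : Type*} (f : Vec d → E) : Prop :=
  ∀ (x : Vec d) (n : Fin d → ℤ), f (x + fun i => (n i : ℝ)) = f x

/-- The `L^p` norm (finite `p`) on the torus, computed on the fundamental domain. -/
def lpNorm (d : ℕ) (p : ℝ) (f : Vec d → ℝ) : ℝ :=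
  (∫ x in cube d, |f x| ^ p) ^ (1 / p)

/-- The `C^1` norm on the torus: sup of `|f|` and of `‖Df‖`. -/
def c1Norm (d : ℕ) (f : Vec d → ℝ) : ℝ :=
  ⨆ x : Vec d, max |f x| ‖fderiv ℝ f x‖

/-- the closed cube -/
def Kube (d : ℕ) : Set (Vec d) := Set.univ.pi fun _ => Set.Icc (0:ℝ) 1

lemma isCompact_Kube (d : ℕ) : IsCompact (Kube d) :=
  isCompact_univ_pi fun _ => isCompact_Icc

lemma cube_subset_Kube (d : ℕ) : cube d ⊆ Kube d :=
  Set.pi_mono fun _ _ => Set.Ico_subset_Icc_self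

lemma measurableSet_cube (d : ℕ) : MeasurableSet (cube d) :=
  MeasurableSet.univ_pi fun _ => measurableSet_Ico

/-- any point can be translated into the cube by an integer vector -/
lemma exists_int_translate (d : ℕ) (x : Vec d) :
    ∃ n : Fin d → ℤ, (x + fun i => (n i : ℝ)) ∈ cube d := by
  refine ⟨fun i => -⌊x i⌋, fun i _ => ?_⟩
  simp only [Pi.add_apply, Int.cast_neg]
  have h0 := Int.fract_nonneg (x i)
  have h1 := Int.fract_lt_one (x i)
  rw [Int.fract] at h0 h1
  constructor
  · linarith
  · linarith

/-- a periodic continuous function has bounded range -/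
lemma bddAbove_range_of_periodic {d : ℕ} {φ : Vec d → ℝ} (hc : Continuous φ)
    (hp : IsPeriodic φ) : BddAbove (Set.range φ) := by
  have h1 : Set.range φ ⊆ φ '' (Kube d) := by
    rintro - ⟨x, rfl⟩
    obtain ⟨n, hn⟩ := exists_int_translate d x
    exact ⟨_, cube_subset_Kube d hn, hp x n⟩
  exact (((isCompact_Kube d).image hc).bddAbove).mono h1

lemma integrableOn_cube {d : ℕ} {φ : Vec d → ℝ} (hc : Continuous φ) :
    IntegrableOn φ (cube d) := by
  exact (hc.continuousOn.integrableOn_compact (isCompact_Kube d)).mono_set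
    (cube_subset_Kube d)

lemma fderiv_periodic {d : ℕ} {f : Vec d → ℝ} (hf : ContDiff ℝ (⊤ : ℕ∞) f)
    (hp : IsPeriodic f) : IsPeriodic (fun x => fderiv ℝ f x) := by
  intro x n
  have hdf := hf.differentiable (by simp)
  have hcomp : (fun y : Vec d => f (y + fun i => (n i : ℝ))) = f := by
    funext y; exact hp y n
  have h1 : HasFDerivAt (fun y : Vec d => f (y + fun i => (n i : ℝ)))
      (fderiv ℝ f (x + fun i => (n i : ℝ))) x := by
    have := ((hdf (x + fun i => (n i : ℝ))).hasFDerivAt).comp x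
      ((hasFDerivAt_id x).add_const (fun i => ((n i : ℝ))))
    simpa [Function.comp_def] using this
  have h2 : HasFDerivAt f (fderiv ℝ f x) x := (hdf x).hasFDerivAt
  rw [hcomp] at h1
  exact h1.unique h2

lemma maxfun_le_c1Norm {d : ℕ} {f : Vec d → ℝ} (hf : ContDiff ℝ (⊤ : ℕ∞) f)
    (hp : IsPeriodic f) (x : Vec d) :
    max |f x| ‖fderiv ℝ f x‖ ≤ c1Norm d f := by
  have hcont : Continuous fun x : Vec d => max |f x| ‖fderiv ℝ f x‖ :=
    Continuous.max (hf.continuous.abs) ((hf.continuous_fderiv (by simp)).norm)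
  have hper : IsPeriodic fun x : Vec d => max |f x| ‖fderiv ℝ f x‖ := by
    intro y n
    simp only [hp y n, fderiv_periodic hf hp y n]
  exact le_ciSup (bddAbove_range_of_periodic hcont hper) x

lemma c1Norm_nonneg {d : ℕ} {f : Vec d → ℝ} (hf : ContDiff ℝ (⊤ : ℕ∞) f)
    (hp : IsPeriodic f) : 0 ≤ c1Norm d f :=
  le_trans (le_trans (abs_nonneg _) (le_max_left _ _)) (maxfun_le_c1Norm hf hp 0)

lemma lipschitz_bound {d : ℕ} {f : Vec d → ℝ} (hf : ContDiff ℝ (⊤ : ℕ∞) f)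
    (hp : IsPeriodic f) (a b : Vec d) :
    |f a - f b| ≤ c1Norm d f * ‖a - b‖ := by
  have := convex_univ.norm_image_sub_le_of_norm_fderiv_le
    (f := f) (C := c1Norm d f)
    (fun x _ => (hf.differentiable (by simp) x))
    (fun x _ => le_trans (le_max_right _ _) (maxfun_le_c1Norm hf hp x))
    (Set.mem_univ b) (Set.mem_univ a)
  simpa [Real.norm_eq_abs, abs_mul] using this

section Decomp
variable (d lam : ℕ)

/-- subcubes -/
def Q (n : Fin d → Fin lam) : Set (Vec d) :=
  Set.univ.pi fun i => Set.Ico ((n i : ℝ) / lam) (((n i : ℝ) + 1) / lam)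

variable {d lam}

lemma measurableSet_Q (n : Fin d → Fin lam) : MeasurableSet (Q d lam n) :=
  MeasurableSet.univ_pi fun _ => measurableSet_Ico

lemma iUnion_Q (hlam : 1 ≤ lam) : (⋃ n : Fin d → Fin lam, Q d lam n) = cube d := by
  have hc : (0:ℝ) < lam := by exact_mod_cast hlam
  ext x
  simp only [Set.mem_iUnion, Q, cube, Set.mem_pi, Set.mem_univ, forall_true_left,
    Set.mem_Ico, true_implies]
  constructor
  · rintro ⟨n, hn⟩ i
    have h1 := (hn i).1
    have h2 := (hn i).2
    constructor
    · have : (0:ℝ) ≤ (n i : ℝ) / lam := by positivity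
      linarith
    · have hle : ((n i : ℝ) + 1) ≤ lam := by
        have : (n i : ℕ) + 1 ≤ lam := (n i).2
        exact_mod_cast this
      have : ((n i : ℝ) + 1) / lam ≤ 1 := by
        rw [div_le_one hc]; linarith
      linarith
  · intro hx
    have hkey : ∀ i, ∃ k : Fin lam, (k : ℝ) / lam ≤ x i ∧ x i < ((k : ℝ) + 1) / lam := by
      intro i
      have h0 : (0:ℝ) ≤ x i * lam := by
        have := (hx i).1; positivity
      have h1 : x i * lam < lam := by
        have := (hx i).2; nlinarith
      have hfl0 : 0 ≤ ⌊x i * lam⌋ := Int.le_floor.2 (by exact_mod_cast h0)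
      have hfllt : ⌊x i * lam⌋ < (lam : ℤ) := Int.floor_lt.2 (by exact_mod_cast h1)
      have hcast : ((⌊x i * lam⌋.toNat : ℕ) : ℝ) = ((⌊x i * lam⌋ : ℤ) : ℝ) := by
        exact_mod_cast congrArg (Int.cast : ℤ → ℝ) (Int.toNat_of_nonneg hfl0)
      refine ⟨⟨⌊x i * lam⌋.toNat, by omega⟩, ?_, ?_⟩
      · rw [div_le_iff₀ hc]
        have h := Int.floor_le (x i * lam)
        simp only [hcast]
        linarith
      · rw [lt_div_iff₀ hc]
        have h := Int.lt_floor_add_one (x i * lam)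
        simp only [hcast]
        linarith
    choose n hn using hkey
    exact ⟨n, hn⟩

lemma pairwise_disjoint_Q (hlam : 1 ≤ lam) :
    Pairwise (Function.onFun Disjoint (Q d lam)) := by
  have hc : (0:ℝ) < lam := by exact_mod_cast hlam
  intro n m hnm
  rw [Function.onFun, Set.disjoint_left]
  intro x hxn hxm
  apply hnm
  funext i
  have h1 := hxn i (Set.mem_univ i)
  have h2 := hxm i (Set.mem_univ i)
  simp only [Set.mem_Ico] at h1 h2
  have ha : ((n i : ℕ) : ℝ) < (m i : ℕ) + 1 := by
    have := lt_of_le_of_lt h1.1 h2.2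
    rwa [div_lt_div_iff₀ hc hc, mul_lt_mul_iff_of_pos_right hc] at this
  have hb : ((m i : ℕ) : ℝ) < (n i : ℕ) + 1 := by
    have := lt_of_le_of_lt h2.1 h1.2
    rwa [div_lt_div_iff₀ hc hc, mul_lt_mul_iff_of_pos_right hc] at this
  have ha' : (n i : ℕ) < (m i : ℕ) + 1 := by exact_mod_cast ha
  have hb' : (m i : ℕ) < (n i : ℕ) + 1 := by exact_mod_cast hb
  exact Fin.ext (by omega)

end Decomp

lemma subst_Q {d lam : ℕ} (hlam : 1 ≤ lam) (f g : Vec d → ℝ)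
    (hgper : IsPeriodic g) (n : Fin d → Fin lam) :
    ∫ x in Q d lam n, f x * g ((lam : ℝ) • x) =
      ((lam : ℝ) ^ d)⁻¹ *
        ∫ y in cube d, f ((lam : ℝ)⁻¹ • (y + fun i => ((n i : ℕ) : ℝ))) * g y := by
  have hc : (0:ℝ) < lam := by exact_mod_cast hlam
  set c : ℝ := (lam : ℝ) with hcdef
  set v : Vec d := (fun i => ((n i : ℕ) : ℝ)) with hvdef
  set ψ : Vec d → ℝ := (cube d).indicator (fun w => f (c⁻¹ • (w + v)) * g w) with hψ
  have hmem : ∀ x : Vec d, x ∈ Q d lam n ↔ c • x - v ∈ cube d := by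
    intro x
    simp only [Q, cube, Set.mem_pi, Set.mem_univ, true_implies, Set.mem_Ico,
      Pi.sub_apply, Pi.smul_apply, smul_eq_mul, hvdef]
    constructor
    · intro h i
      obtain ⟨h1, h2⟩ := h i
      rw [div_le_iff₀ hc] at h1
      rw [lt_div_iff₀ hc] at h2
      constructor <;> nlinarith
    · intro h i
      obtain ⟨h1, h2⟩ := h i
      constructor
      · rw [div_le_iff₀ hc]; nlinarith
      · rw [lt_div_iff₀ hc]; nlinarith
  have hpt : ∀ x : Vec d,
      (Q d lam n).indicator (fun x => f x * g (c • x)) x = ψ (c • x - v) := by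
    intro x
    by_cases hx : x ∈ Q d lam n
    · rw [Set.indicator_of_mem hx, hψ, Set.indicator_of_mem ((hmem x).1 hx)]
      have e1 : c⁻¹ • (c • x - v + v) = x := by
        rw [sub_add_cancel, smul_smul, inv_mul_cancel₀ (ne_of_gt hc), one_smul]
      have e2 : g (c • x - v) = g (c • x) := by
        have := hgper (c • x - v) (fun i => ((n i : ℕ) : ℤ))
        have hv : (fun i => (((n i : ℕ) : ℤ) : ℝ)) = v := by
          funext i; push_cast; rfl
        rw [hv, sub_add_cancel] at this
        exact this.symm
      rw [e1, e2]
    · rw [Set.indicator_of_notMem hx, hψ,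
        Set.indicator_of_notMem (fun h => hx ((hmem x).2 h))]
  calc ∫ x in Q d lam n, f x * g (c • x)
      = ∫ x, (Q d lam n).indicator (fun x => f x * g (c • x)) x := by
        rw [integral_indicator (measurableSet_Q n)]
    _ = ∫ x, (fun z => ψ (z - v)) (c • x) := by
        exact integral_congr_ae (Filter.Eventually.of_forall hpt)
    _ = |(c ^ Module.finrank ℝ (Vec d))⁻¹| • ∫ z, ψ (z - v) :=
        Measure.integral_comp_smul volume (fun z => ψ (z - v)) c
    _ = (c ^ d)⁻¹ * ∫ z, ψ z := by
        rw [integral_sub_right_eq_self ψ v]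
        have : Module.finrank ℝ (Vec d) = d := by
          rw [Module.finrank_fin_fun]
        rw [this, abs_of_nonneg (by positivity), smul_eq_mul]
    _ = (c ^ d)⁻¹ * ∫ y in cube d, f (c⁻¹ • (y + v)) * g y := by
        rw [hψ, integral_indicator (measurableSet_cube d)]

set_option maxHeartbeats 1000000 in
/-- **Mean value of fast oscillations** (Lemma 2.6): if `g` has zero mean on the torus, then
`|∫ f(x) g(λx) dx| ≤ √d λ⁻¹ ‖f‖_{C¹} ‖g‖_{L¹}`. -/
theorem mean_value_fast_oscillations (d : ℕ) (hd : 1 ≤ d) (lam : ℕ) (hlam : 1 ≤ lam)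
    (f g : Vec d → ℝ)
    (hf : ContDiff ℝ (⊤ : ℕ∞) f) (hg : ContDiff ℝ (⊤ : ℕ∞) g)
    (hfper : IsPeriodic f) (hgper : IsPeriodic g)
    (hgmean : (∫ x in cube d, g x) = 0) :
    |∫ x in cube d, f x * g ((lam : ℝ) • x)| ≤
      Real.sqrt d * (lam : ℝ)⁻¹ * c1Norm d f * lpNorm d 1 g := by
  have hc : (0:ℝ) < lam := by exact_mod_cast hlam
  set c : ℝ := (lam : ℝ) with hcdef
  set M : ℝ := c1Norm d f with hM
  set I : ℝ := ∫ x in cube d, |g x| with hI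
  have hM0 : 0 ≤ M := c1Norm_nonneg hf hfper
  have hI0 : 0 ≤ I := integral_nonneg fun x => abs_nonneg _
  have hlp : lpNorm d 1 g = I := by
    simp [_root_.lpNorm, Real.rpow_one, hI]
  -- integrability of various functions on the cube
  have hgint : IntegrableOn g (cube d) := integrableOn_cube hg.continuous
  have hgabs : IntegrableOn (fun x => |g x|) (cube d) :=
    integrableOn_cube hg.continuous.abs
  have hFcont : Continuous fun x : Vec d => f x * g (c • x) :=
    hf.continuous.mul (hg.continuous.comp (continuous_const_smul c))
  have hFint : IntegrableOn (fun x => f x * g (c • x)) (cube d) :=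
    integrableOn_cube hFcont
  -- split into subcubes
  have hsplit : (∫ x in cube d, f x * g (c • x)) =
      ∑ n : Fin d → Fin lam, ∫ x in Q d lam n, f x * g (c • x) := by
    rw [← iUnion_Q (d := d) hlam,
      integral_iUnion (fun n => measurableSet_Q n) (pairwise_disjoint_Q hlam)
        (by rw [iUnion_Q (d := d) hlam]; exact hFint),
      tsum_fintype]
  -- bound each term
  have hterm : ∀ n : Fin d → Fin lam,
      |∫ x in Q d lam n, f x * g (c • x)| ≤ (c ^ d)⁻¹ * (M * c⁻¹ * I) := by
    intro n
    rw [subst_Q hlam f g hgper n]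
    set v : Vec d := (fun i => ((n i : ℕ) : ℝ)) with hv
    set K : ℝ := f (c⁻¹ • v) with hK
    set u : Vec d → ℝ := fun y => f (c⁻¹ • (y + v)) - K with hu
    have hucont : Continuous u :=
      ((hf.continuous.comp (by continuity)).sub continuous_const)
    have hsub : (∫ y in cube d, f (c⁻¹ • (y + v)) * g y) =
        ∫ y in cube d, u y * g y := by
      have h1 : (∫ y in cube d, (u y * g y + K * g y)) =
          (∫ y in cube d, u y * g y) + ∫ y in cube d, K * g y :=
        integral_add (integrableOn_cube (hucont.mul hg.continuous))
          (hgint.const_mul K)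
      have h2 : (∫ y in cube d, K * g y) = 0 := by
        rw [integral_const_mul, hgmean, mul_zero]
      calc (∫ y in cube d, f (c⁻¹ • (y + v)) * g y)
          = ∫ y in cube d, (u y * g y + K * g y) := by
            congr 1; funext y; rw [hu]; ring
        _ = ∫ y in cube d, u y * g y := by rw [h1, h2, add_zero]
    rw [hsub, abs_mul, abs_of_nonneg (by positivity : (0:ℝ) ≤ (c ^ d)⁻¹)]
    gcongr
    have hbound : ∀ y ∈ cube d, |u y * g y| ≤ (M * c⁻¹) * |g y| := by
      intro y hy
      rw [abs_mul]
      refine mul_le_mul_of_nonneg_right ?_ (abs_nonneg _)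
      have hdiff : |f (c⁻¹ • (y + v)) - f (c⁻¹ • v)| ≤ M * ‖c⁻¹ • y‖ := by
        have := lipschitz_bound hf hfper (c⁻¹ • (y + v)) (c⁻¹ • v)
        have e : c⁻¹ • (y + v) - c⁻¹ • v = c⁻¹ • y := by
          rw [smul_add]; abel
        rwa [e] at this
      have hny : ‖y‖ ≤ 1 := by
        rw [pi_norm_le_iff_of_nonneg zero_le_one]
        intro i
        have := hy i (Set.mem_univ i)
        rw [Real.norm_eq_abs, abs_le]
        exact ⟨by linarith [this.1], le_of_lt this.2⟩
      have : ‖c⁻¹ • y‖ ≤ c⁻¹ := by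
        rw [norm_smul, Real.norm_eq_abs, abs_of_nonneg (by positivity)]
        calc c⁻¹ * ‖y‖ ≤ c⁻¹ * 1 := by gcongr
          _ = c⁻¹ := mul_one _
      calc |u y| ≤ M * ‖c⁻¹ • y‖ := hdiff
        _ ≤ M * c⁻¹ := by gcongr
    calc |∫ y in cube d, u y * g y| ≤ ∫ y in cube d, |u y * g y| := by
          simpa [Real.norm_eq_abs, abs_mul] using
            norm_integral_le_integral_norm (μ := volume.restrict (cube d))
              (fun y => u y * g y)
      _ ≤ ∫ y in cube d, (M * c⁻¹) * |g y| :=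
          setIntegral_mono_on
            (integrableOn_cube (hucont.mul hg.continuous).abs)
            (hgabs.const_mul _) (measurableSet_cube d) hbound
      _ = M * c⁻¹ * I := by rw [integral_const_mul]
  -- sum up
  have hcard : (Fintype.card (Fin d → Fin lam) : ℝ) = c ^ d := by
    simp [Fintype.card_fun, hcdef]
  have htotal : |∫ x in cube d, f x * g (c • x)| ≤ M * c⁻¹ * I := by
    rw [hsplit]
    calc |∑ n : Fin d → Fin lam, ∫ x in Q d lam n, f x * g (c • x)|
        ≤ ∑ n : Fin d → Fin lam, |∫ x in Q d lam n, f x * g (c • x)| :=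
          Finset.abs_sum_le_sum_abs _ _
      _ ≤ ∑ _n : Fin d → Fin lam, (c ^ d)⁻¹ * (M * c⁻¹ * I) :=
          Finset.sum_le_sum fun n _ => hterm n
      _ = (Fintype.card (Fin d → Fin lam) : ℝ) * ((c ^ d)⁻¹ * (M * c⁻¹ * I)) := by
          rw [Finset.sum_const, Finset.card_univ, nsmul_eq_mul]
      _ = M * c⁻¹ * I := by
          rw [hcard, ← mul_assoc, mul_inv_cancel₀ (by positivity), one_mul]
  have hsqrt : (1:ℝ) ≤ Real.sqrt d := by
    rw [show (1:ℝ) = Real.sqrt 1 by simp]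
    exact Real.sqrt_le_sqrt (by exact_mod_cast hd)
  rw [hlp]
  calc |∫ x in cube d, f x * g (c • x)| ≤ M * c⁻¹ * I := htotal
    _ ≤ Real.sqrt d * (M * c⁻¹ * I) :=
        le_mul_of_one_le_left (by positivity) hsqrt
    _ = Real.sqrt d * c⁻¹ * M * I := by ring
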